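/- Let U = [[A, B], [C, D]] be a block unitary on ℂ^m ⊕ ℂ^n with I − zD invertible for all |z| ≤ 1 (e.g. ‖D‖ < 1), and let V = {(z,w) ∈ 𝔻² : det(Ψ(z) − wI) = 0} where Ψ(z) = A + zB(I − zD)^{-1}C and 𝔻 is the open unit disk. Then for any sequence (zₖ, wₖ) in V converging to a point (z, w) with |z| = 1, one has |w| = 1. In other words, the closure of V meets the topological boundary of the closed bidisk only in the torus {(z,w) : |z| = |w| = 1}. -/

import Mathlib

/-!
Evaluate the colligation at a boundary point `z`: if `Ψ(z) v = w v` and `h = (1 - zD)⁻¹ C v`,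
then `U (v, z h) = (w v, h)`. Since `U` is unitary, `|w|² ‖v‖² + ‖h‖² = ‖v‖² + |z|² ‖h‖²`,
so `|z| = 1` forces `|w| = 1`. The limit point `(z, w)` still satisfies `det (Ψ(z) - w) = 0`
because `Ψ` is continuous wherever `1 - zD` is invertible.
-/

open Matrix Filter Topology

namespace Matrix

variable {R ι κ : Type*} [Fintype κ] [DecidableEq κ]

theorem star_mulVec_dotProduct_mulVec_of_mem_unitaryGroup [Fintype ι] [DecidableEq ι]
    [CommRing R] [StarRing R] {U : Matrix ι ι R} (hU : U ∈ unitaryGroup ι R) (x : ι → R) :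
    star (U *ᵥ x) ⬝ᵥ (U *ᵥ x) = star x ⬝ᵥ x := by
  rw [star_mulVec, dotProduct_mulVec, vecMul_vecMul, ← star_eq_conjTranspose,
    mem_unitaryGroup_iff'.mp hU, vecMul_one]

noncomputable def transferFunction [CommRing R] (A : Matrix ι ι R) (B : Matrix ι κ R)
    (C : Matrix κ ι R) (D : Matrix κ κ R) (z : R) : Matrix ι ι R :=
  A + z • (B * (1 - z • D)⁻¹ * C)

theorem continuousAt_transferFunction [Field R] [TopologicalSpace R] [IsTopologicalDivisionRing R]
    (A : Matrix ι ι R) (B : Matrix ι κ R) (C : Matrix κ ι R)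
    {D : Matrix κ κ R} {z : R} (hz : IsUnit (1 - z • D).det) :
    ContinuousAt (transferFunction A B C D) z := by
  have hinv : ContinuousAt Inv.inv (1 - z • D) := by
    refine continuousAt_matrix_inv _ ?_
    rw [Ring.inverse_eq_inv']
    exact continuousAt_inv₀ hz.ne_zero
  have hres : ContinuousAt (fun z : R => (1 - z • D)⁻¹) z :=
    ContinuousAt.comp (g := Inv.inv) (f := fun z : R => 1 - z • D) hinv (by fun_prop)
  have hsandwich : Continuous fun N : Matrix κ κ R => B * N * C := by fun_prop
  exact continuousAt_const.add (continuousAt_id.smul (hsandwich.continuousAt.comp hres))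

theorem fromBlocks_mulVec_eq_transferFunction [Fintype ι] [CommRing R] (A : Matrix ι ι R)
    (B : Matrix ι κ R) (C : Matrix κ ι R) {D : Matrix κ κ R} {z : R}
    (hz : IsUnit (1 - z • D).det) (v : ι → R) :
    fromBlocks A B C D *ᵥ Sum.elim v (z • ((1 - z • D)⁻¹ *ᵥ C *ᵥ v)) =
      Sum.elim (transferFunction A B C D z *ᵥ v) ((1 - z • D)⁻¹ *ᵥ C *ᵥ v) := by
  set h := (1 - z • D)⁻¹ *ᵥ C *ᵥ v
  have hres : (1 - z • D) *ᵥ h = C *ᵥ v := by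
    rw [mulVec_mulVec, mul_nonsing_inv _ hz, one_mulVec]
  rw [fromBlocks_mulVec, Sum.elim_comp_inl, Sum.elim_comp_inr, mulVec_smul, mulVec_smul]
  congr 1
  · rw [transferFunction, add_mulVec, smul_mulVec, Matrix.mul_assoc, ← mulVec_mulVec,
      ← mulVec_mulVec]
  · rw [sub_mulVec, one_mulVec, smul_mulVec] at hres
    rw [← hres, sub_add_cancel]

variable {𝕜 : Type*} [RCLike 𝕜]

open scoped ComplexOrder in
theorem norm_eq_one_of_transferFunction_mulVec_eq_smul [Fintype ι] [DecidableEq ι]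
    {A : Matrix ι ι 𝕜} {B : Matrix ι κ 𝕜} {C : Matrix κ ι 𝕜} {D : Matrix κ κ 𝕜}
    (hU : fromBlocks A B C D ∈ unitaryGroup (ι ⊕ κ) 𝕜)
    {z w : 𝕜} (hzD : IsUnit (1 - z • D).det) (hz : ‖z‖ = 1) {v : ι → 𝕜} (hv0 : v ≠ 0)
    (hv : transferFunction A B C D z *ᵥ v = w • v) : ‖w‖ = 1 := by
  have hiso := star_mulVec_dotProduct_mulVec_of_mem_unitaryGroup hU
    (Sum.elim v (z • ((1 - z • D)⁻¹ *ᵥ C *ᵥ v)))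
  rw [fromBlocks_mulVec_eq_transferFunction A B C hzD, hv] at hiso
  simp only [Function.star_sumElim, sumElim_dotProduct_sumElim, star_smul, smul_dotProduct,
    dotProduct_smul, smul_eq_mul, RCLike.star_def, ← mul_assoc, RCLike.mul_conj, hz,
    RCLike.ofReal_one, one_pow, one_mul] at hiso
  have hw : ((‖w‖ ^ 2 : ℝ) : 𝕜) = 1 := by
    refine mul_right_cancel₀ (dotProduct_star_self_eq_zero.not.mpr hv0) ?_
    push_cast
    linear_combination hiso
  exact (pow_eq_one_iff_of_nonneg (norm_nonneg w) two_ne_zero).mp (mod_cast hw)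

end Matrix

theorem distinguished_variety_exits_through_torus (m n : ℕ)
    (A : Matrix (Fin m) (Fin m) ℂ) (B : Matrix (Fin m) (Fin n) ℂ)
    (C : Matrix (Fin n) (Fin m) ℂ) (D : Matrix (Fin n) (Fin n) ℂ)
    (hU : Matrix.fromBlocks A B C D ∈ Matrix.unitaryGroup (Fin m ⊕ Fin n) ℂ)
    (hD : ∀ z : ℂ, ‖z‖ ≤ 1 → IsUnit ((1 : Matrix (Fin n) (Fin n) ℂ) - z • D))
    (zs ws : ℕ → ℂ)
    (hmem : ∀ k, ‖zs k‖ < 1 ∧ ‖ws k‖ < 1 ∧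
        ((A + zs k • (B * (1 - zs k • D)⁻¹ * C)) - ws k • 1).det = 0)
    (z w : ℂ)
    (hz : Tendsto zs atTop (nhds z)) (hw : Tendsto ws atTop (nhds w))
    (hbdry : ‖z‖ = 1) :
    ‖w‖ = 1 := by
  have hzD := (isUnit_iff_isUnit_det _).mp (hD z hbdry.le)
  have hlim : Tendsto (fun k => (transferFunction A B C D (zs k) - ws k • 1).det) atTop
      (𝓝 (transferFunction A B C D z - w • 1).det) :=
    (continuous_id.matrix_det.tendsto _).comp
      (((continuousAt_transferFunction A B C hzD).tendsto.comp hz).sub (hw.smul_const 1))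
  have hdet : (transferFunction A B C D z - w • 1).det = 0 :=
    tendsto_nhds_unique hlim (tendsto_const_nhds.congr fun k => ((hmem k).2.2).symm)
  obtain ⟨v, hv0, hv⟩ := exists_mulVec_eq_zero_iff.mpr hdet
  rw [sub_mulVec, smul_mulVec, one_mulVec, sub_eq_zero] at hv
  exact norm_eq_one_of_transferFunction_mulVec_eq_smul hU hzD hbdry hv0 hv
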